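/- arXiv:1410.7174 — 3 statements merged into one kernel-verified Lean document; each statement's English description precedes it below -/
import Mathlib

section
/- Let f : 2^{[N]} → ℝ be submodular with f(∅) = 0, and let π be a permutation of [N]. Define x ∈ ℝ^N by x_{π(i)} = f({π(1),...,π(i)}) - f({π(1),...,π(i-1)}) for i = 1,...,N. Then x lies in the submodular polyhedron P(f) = { x ∈ ℝ^N : Σ_{i∈A} x_i ≤ f(A) for all A ⊆ [N] }. -/
/-!
Order the ground set by the positions `σ` and add the elements of `A` one at a time in increasing
position. When `a` is added to `s`, all of `s` lies before `a`, so submodularity applied to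
`insert a s` and the set of elements before `a` bounds the greedy marginal gain of `a` by
`f (insert a s) - f s`. Summing over `A` telescopes to `f A - f ∅ = f A`.
-/

open Finset Function

def IsSubmodular {α : Type*} [DecidableEq α] (f : Finset α → ℝ) : Prop :=
  ∀ A B, f (A ∪ B) + f (A ∩ B) ≤ f A + f B

variable {α : Type*} [Fintype α]

def positionPrefix (σ : α → ℕ) (k : ℕ) : Finset α :=
  univ.filter fun a => σ a < k

def greedyGain (f : Finset α → ℝ) (σ : α → ℕ) (a : α) : ℝ :=
  f (positionPrefix σ (σ a + 1)) - f (positionPrefix σ (σ a))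

lemma mem_positionPrefix {σ : α → ℕ} {k : ℕ} {x : α} : x ∈ positionPrefix σ k ↔ σ x < k := by
  simp [positionPrefix]

variable [DecidableEq α]

section

variable {σ : α → ℕ} {a : α} {s : Finset α}

lemma insert_union_positionPrefix (hσ : Injective σ) (hs : ∀ x ∈ s, σ x ≤ σ a) :
    insert a s ∪ positionPrefix σ (σ a) = positionPrefix σ (σ a + 1) := by
  ext x
  simp only [mem_union, mem_insert, mem_positionPrefix]
  constructor
  · rintro ((rfl | hx) | hx)
    · omega
    · have := hs x hx; omega
    · omega
  · intro hx
    by_cases hxa : x = a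
    · exact Or.inl (Or.inl hxa)
    · have : σ x ≠ σ a := hσ.ne hxa
      exact Or.inr (by omega)

lemma insert_inter_positionPrefix (hσ : Injective σ) (ha : a ∉ s) (hs : ∀ x ∈ s, σ x ≤ σ a) :
    insert a s ∩ positionPrefix σ (σ a) = s := by
  ext x
  simp only [mem_inter, mem_insert, mem_positionPrefix]
  constructor
  · rintro ⟨rfl | hx, hlt⟩
    · omega
    · exact hx
  · intro hx
    have : σ x ≠ σ a := hσ.ne (ne_of_mem_of_not_mem hx ha)
    exact ⟨Or.inr hx, lt_of_le_of_ne (hs x hx) this⟩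

lemma greedyGain_le_sub {f : Finset α → ℝ} (hf : IsSubmodular f) (hσ : Injective σ) (ha : a ∉ s)
    (hs : ∀ x ∈ s, σ x ≤ σ a) : greedyGain f σ a ≤ f (insert a s) - f s := by
  have hsub := hf (insert a s) (positionPrefix σ (σ a))
  rw [insert_union_positionPrefix hσ hs, insert_inter_positionPrefix hσ ha hs] at hsub
  unfold greedyGain
  linarith

theorem sum_greedyGain_le {f : Finset α → ℝ} (hf : IsSubmodular f) (h0 : f ∅ = 0)
    (hσ : Injective σ) (A : Finset α) : ∑ a ∈ A, greedyGain f σ a ≤ f A := by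
  induction A using Finset.induction_on_max_value σ with
  | empty => simp [h0]
  | insert a s ha hs ih =>
    rw [sum_insert ha]
    linarith [greedyGain_le_sub hf hσ ha hs]

end

/-- the greedy vector associated with a permutation `π` lies in the
submodular polyhedron `P(f)`.  Here `chain i = {π 0, …, π (i-1)}` (the first `i`
elements in the order `π`), and the greedy vector is
`x (π i) = f (chain (i+1)) - f (chain i)`, i.e.
`x j = f (chain (π⁻¹ j + 1)) - f (chain (π⁻¹ j))`. -/
theorem greedy_mem_submodular_polyhedron (N : ℕ) (f : Finset (Fin N) → ℝ)
    (hf : ∀ A B : Finset (Fin N), f A + f B ≥ f (A ∪ B) + f (A ∩ B))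
    (h0 : f ∅ = 0) (π : Equiv.Perm (Fin N))
    (chain : ℕ → Finset (Fin N))
    (hchain : ∀ i, chain i = Finset.univ.filter (fun j : Fin N => (π.symm j : ℕ) < i))
    (x : Fin N → ℝ)
    (hx : ∀ j : Fin N, x j = f (chain ((π.symm j : ℕ) + 1)) - f (chain (π.symm j : ℕ))) :
    ∀ A : Finset (Fin N), ∑ i ∈ A, x i ≤ f A := by
  intro A
  have hσ : Injective fun j => (π.symm j : ℕ) := Fin.val_injective.comp π.symm.injective
  have hchain' : chain = positionPrefix fun j => (π.symm j : ℕ) := funext hchain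
  have hx' : x = greedyGain f fun j => (π.symm j : ℕ) := by
    funext j
    rw [hx, hchain', greedyGain]
  rw [hx']
  exact sum_greedyGain_le hf h0 hσ A
end

section
/- Let f_s : 2^{[N]} → ℝ≥0 for s ∈ [0 : 2^N - 1] be submodular set functions, and define C' = max over probability vectors λ ∈ Δ_{2^N - 1} of min_{A ⊆ [N]} Σ_s λ_s f_s(A). Then there exists an optimal λ* achieving C' with at most N+1 strictly positive entries, provided C' > 0. -/
/-!
The mixtures `λ` whose every cut has weight at least `C'` form a nonempty compact set, so
(Krein–Milman) it has an extreme point `λ`. The cuts that are tight for `λ` form a lattice on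
which every `f s` with `λ s > 0` is modular, so a modular function vanishing on a maximal chain
of tight cuts (at most `N + 1` sets) vanishes on all of them. If `λ` had more than `N + 1`
positive entries, some `μ ≠ 0` supported on them would be orthogonal to that chain, hence to
every tight cut, and `λ + tμ` would keep every cut at least `C'` for small `|t|`. Rescaling
`λ + tμ` to a probability vector would beat `C' > 0` unless `∑ μ = 0`; but then `λ ± tμ` are
themselves optimal and `λ` is their midpoint.
-/

open Finset Filter Topology

section Modular

variable {α G : Type*} [DecidableEq α] [AddCommGroup G]

def IsModularOn (h : Finset α → G) (M : Finset (Finset α)) : Prop :=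
  ∀ A ∈ M, ∀ B ∈ M, h (A ∪ B) + h (A ∩ B) = h A + h B

variable [Fintype α] {M : Finset (Finset α)}

theorem exists_card_le_forall_union_eq_zero (hU : ∀ A ∈ M, ∀ B ∈ M, A ∪ B ∈ M)
    (hI : ∀ A ∈ M, ∀ B ∈ M, A ∩ B ∈ M) {D : Finset α} (hD : D ∈ M) :
    ∃ T : Finset (Finset α), #T ≤ #Dᶜ + 1 ∧ ∀ h : Finset α → G, IsModularOn h M →
      (∀ c ∈ T, h c = 0) → ∀ A ∈ M, h (A ∪ D) = 0 := by
  -- `T` is a maximal chain of `M` above `D`, built upwards through covers `D ⋖ D'` in `M`.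
  induction hn : #Dᶜ using Nat.strong_induction_on generalizing D with
  | _ n ih =>
  by_cases hcov : ∃ B ∈ M, D ⊂ B
  · obtain ⟨D', hD', hD'min⟩ := exists_min_image (M.filter (D ⊂ ·)) card
      (by simpa only [filter_nonempty_iff] using hcov)
    obtain ⟨hD'M, hDD'⟩ := mem_filter.1 hD'
    have hcover : ∀ B ∈ M, D ⊆ B → B ⊆ D' → B = D ∨ B = D' := fun B hB hDB hBD' =>
      (eq_or_ne B D).imp_right fun hne =>
        eq_of_subset_of_card_le hBD' (hD'min B (mem_filter.2 ⟨hB, hDB.ssubset_of_ne hne.symm⟩))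
    have hlt : #D'ᶜ < n := hn ▸ card_lt_card (compl_ssubset_compl.2 hDD')
    obtain ⟨T, hT, hTzero⟩ := ih #D'ᶜ hlt hD'M rfl
    refine ⟨insert D T, (card_insert_le _ _).trans (by omega), fun h hh hzero A hA => ?_⟩
    have hzeroT : ∀ c ∈ T, h c = 0 := fun c hc => hzero c (mem_insert_of_mem hc)
    have hmod := hh (A ∪ D) (hU A hA D hD) D' hD'M
    have hunion : A ∪ D ∪ D' = A ∪ D' := by
      rw [union_assoc, union_eq_right.2 hDD'.subset]
    have hinter : h ((A ∪ D) ∩ D') = 0 := by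
      rcases hcover _ (hI _ (hU A hA D hD) D' hD'M) (subset_inter subset_union_right hDD'.subset)
        inter_subset_right with h' | h'
      · rw [h']; exact hzero D (mem_insert_self D T)
      · simpa [h'] using hTzero h hh hzeroT D' hD'M
    have hD'0 : h D' = 0 := by simpa using hTzero h hh hzeroT D' hD'M
    rw [hunion, hTzero h hh hzeroT A hA, hinter, hD'0] at hmod
    simpa using hmod.symm
  · push Not at hcov
    refine ⟨{D}, by simp, fun h _ hzero A hA => ?_⟩
    have hAD : A ∪ D = D := by
      by_contra hne
      exact hcov _ (hU A hA D hD) (subset_union_right.ssubset_of_ne (Ne.symm hne))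
    rw [hAD]
    exact hzero D (mem_singleton_self D)

theorem exists_card_le_forall_eq_zero_of_isModularOn (hU : ∀ A ∈ M, ∀ B ∈ M, A ∪ B ∈ M)
    (hI : ∀ A ∈ M, ∀ B ∈ M, A ∩ B ∈ M) :
    ∃ T : Finset (Finset α), #T ≤ Fintype.card α + 1 ∧ ∀ h : Finset α → G, IsModularOn h M →
      (∀ c ∈ T, h c = 0) → ∀ A ∈ M, h A = 0 := by
  rcases M.eq_empty_or_nonempty with rfl | hM
  · exact ⟨∅, by simp, by simp⟩
  have hbot : M.inf' hM id ∈ M := inf'_mem _ hI M hM id fun _ h => h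
  obtain ⟨T, hT, hTzero⟩ := exists_card_le_forall_union_eq_zero (G := G) hU hI hbot
  refine ⟨T, hT.trans (by simpa using card_le_univ _), fun h hh hzero A hA => ?_⟩
  have hbotA : M.inf' hM id ⊆ A := inf'_le id hA
  have hA0 := hTzero h hh hzero A hA
  rwa [union_eq_left.2 hbotA] at hA0

end Modular

theorem exists_ne_zero_forall_sum_mul_eq_zero {K ι κ : Type*} [Field K] [Fintype ι]
    (F : ι → κ → K) {S : Finset ι} {T : Finset κ} (h : #T < #S) :
    ∃ μ : ι → K, μ ≠ 0 ∧ (∀ s ∉ S, μ s = 0) ∧ ∀ c ∈ T, ∑ s, μ s * F s c = 0 := by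
  classical
  let Φ := Matrix.mulVecLin (Matrix.of fun (c : T) (s : S) => F s c)
  obtain ⟨ν, hν, hν0⟩ := (Submodule.ne_bot_iff _).1 (LinearMap.ker_ne_bot_of_finrank_lt
    (f := Φ) (by simpa using h))
  refine ⟨fun s => if hs : s ∈ S then ν ⟨s, hs⟩ else 0, fun h0 => hν0 ?_, fun s hs => dif_neg hs,
    fun c hc => ?_⟩
  · ext s; simpa using congrFun h0 s
  · have := congrFun (LinearMap.mem_ker.1 hν) ⟨c, hc⟩
    simp only [Φ, Matrix.mulVecLin_apply, Matrix.mulVec, dotProduct, Matrix.of_apply,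
      Pi.zero_apply] at this
    rw [← sum_subset (subset_univ S) (fun s _ hs => by simp [hs]), ← sum_attach, ← this]
    exact sum_congr rfl fun s _ => by simp [mul_comm]

theorem sum_mul_sup_inf_eq_of_sum_mul_eq {ι α : Type*} [Fintype ι] [Lattice α] {f : ι → α → ℝ}
    {l : ι → ℝ} {C : ℝ} {A B : α} (hf : ∀ s A B, f s (A ⊔ B) + f s (A ⊓ B) ≤ f s A + f s B)
    (hl : ∀ s, 0 ≤ l s) (hC : ∀ A, C ≤ ∑ s, l s * f s A)
    (hA : ∑ s, l s * f s A = C) (hB : ∑ s, l s * f s B = C) :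
    ∑ s, l s * f s (A ⊔ B) = C ∧ ∑ s, l s * f s (A ⊓ B) = C ∧
      ∀ s, 0 < l s → f s (A ⊔ B) + f s (A ⊓ B) = f s A + f s B := by
  have hgap : ∀ s, 0 ≤ l s * (f s A + f s B - (f s (A ⊔ B) + f s (A ⊓ B))) := fun s =>
    mul_nonneg (hl s) (sub_nonneg.2 (hf s A B))
  have hsum : ∑ s, l s * (f s A + f s B - (f s (A ⊔ B) + f s (A ⊓ B))) =
      2 * C - (∑ s, l s * f s (A ⊔ B) + ∑ s, l s * f s (A ⊓ B)) := by
    simp only [mul_sub, mul_add, sum_sub_distrib, sum_add_distrib, hA, hB]; ring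
  have hsup := hC (A ⊔ B)
  have hinf := hC (A ⊓ B)
  have hzero : ∑ s, l s * (f s A + f s B - (f s (A ⊔ B) + f s (A ⊓ B))) = 0 :=
    le_antisymm (by linarith) (sum_nonneg fun s _ => hgap s)
  refine ⟨by linarith, by linarith, fun s hs => ?_⟩
  have := (sum_eq_zero_iff_of_nonneg fun s _ => hgap s).1 hzero s (mem_univ s)
  linarith [(mul_eq_zero.1 this).resolve_left hs.ne']

theorem eventually_le_add_mul {c x v : ℝ} (h : c ≤ x) (hv : x = c → v = 0) :
    ∀ᶠ t in 𝓝 (0 : ℝ), c ≤ x + t * v := by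
  rcases h.eq_or_lt with rfl | hlt
  · simp [hv rfl]
  · have : Tendsto (fun t : ℝ => x + t * v) (𝓝 0) (𝓝 x) := by
      have hcont : Continuous fun t : ℝ => x + t * v := by fun_prop
      simpa using hcont.tendsto 0
    exact (this.eventually_const_lt hlt).mono fun _ => le_of_lt

theorem eq_zero_of_mem_extremePoints {E : Type*} [AddCommGroup E] [Module ℝ E] {A : Set E}
    {x v : E} (hx : x ∈ A.extremePoints ℝ) (h : ∀ᶠ t in 𝓝 (0 : ℝ), x + t • v ∈ A) : v = 0 := by
  obtain ⟨ε, hε, hball⟩ := Metric.eventually_nhds_iff.1 h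
  have hmem : ∀ t, |t| < ε → x + t • v ∈ A := fun t ht => hball (by simpa using ht)
  have hpos : 0 < ε / 2 := half_pos hε
  have hsmall : |ε / 2| < ε := by rw [abs_of_pos hpos]; linarith
  have hseg : x ∈ openSegment ℝ (x + (ε / 2) • v) (x + (-(ε / 2)) • v) :=
    ⟨1 / 2, 1 / 2, by norm_num, by norm_num, by norm_num, by
      simp only [smul_add, neg_smul, smul_neg, smul_smul]; module⟩
  have := hx.2 (hmem _ hsmall) (hmem _ (by rwa [abs_neg])) hseg
  simpa [hpos.ne'] using this

section MinCut

variable {ι α : Type*} [Fintype ι] (f : ι → α → ℝ)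

noncomputable def minCutValue (l : ι → ℝ) : ℝ := sInf {u : ℝ | ∃ A, u = ∑ s, l s * f s A}

def minCutSuperlevel (C : ℝ) : Set (ι → ℝ) :=
  stdSimplex ℝ ι ∩ ⋂ A, {l | C ≤ ∑ s, l s * f s A}

theorem minCutValue_eq_inf' [Fintype α] [Nonempty α] (l : ι → ℝ) :
    minCutValue f l = univ.inf' univ_nonempty fun A => ∑ s, l s * f s A := by
  rw [inf'_eq_csInf_image, minCutValue]
  congr 1
  ext u
  simp [eq_comm]

theorem le_minCutValue_iff [Fintype α] [Nonempty α] {l : ι → ℝ} {C : ℝ} :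
    C ≤ minCutValue f l ↔ ∀ A, C ≤ ∑ s, l s * f s A := by
  simp [minCutValue_eq_inf', le_inf'_iff]

theorem continuous_minCutValue [Fintype α] [Nonempty α] : Continuous (minCutValue f) := by
  simp_rw [funext (minCutValue_eq_inf' f)]
  exact Continuous.finset_inf'_apply _ fun A _ => by fun_prop

theorem isGreatest_sSup_minCutValue [Nonempty ι] [Fintype α] [Nonempty α] :
    IsGreatest (minCutValue f '' stdSimplex ℝ ι) (sSup (minCutValue f '' stdSimplex ℝ ι)) :=
  ((isCompact_stdSimplex ℝ ι).image (continuous_minCutValue f)).isGreatest_sSup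
    ((Set.nonempty_coe_sort.1 inferInstance).image _)

theorem mem_minCutSuperlevel {C : ℝ} {l : ι → ℝ} :
    l ∈ minCutSuperlevel f C ↔ l ∈ stdSimplex ℝ ι ∧ ∀ A, C ≤ ∑ s, l s * f s A := by
  simp [minCutSuperlevel]

theorem isCompact_minCutSuperlevel (C : ℝ) : IsCompact (minCutSuperlevel f C) :=
  (isCompact_stdSimplex ℝ ι).inter_right <| isClosed_iInter fun A =>
    isClosed_le continuous_const (by fun_prop)

end MinCut

section Optimal

variable {ι α : Type*} [Fintype ι] {C : ℝ}

theorem one_le_sum_of_forall_le_sum_mul [Nonempty α] {f : ι → α → ℝ}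
    (hmax : ∀ c, (minCutSuperlevel f c).Nonempty → c ≤ C) (hC : 0 < C)
    {x : ι → ℝ} (hx0 : ∀ s, 0 ≤ x s) (hx : ∀ A, C ≤ ∑ s, x s * f s A) : 1 ≤ ∑ s, x s := by
  set d := ∑ s, x s
  have hd : 0 < d := by
    by_contra! hd
    have hx_eq : ∀ s, x s = 0 := fun s => (sum_eq_zero_iff_of_nonneg fun s _ => hx0 s).1
      (le_antisymm hd (sum_nonneg fun s _ => hx0 s)) s (mem_univ s)
    obtain ⟨A⟩ := ‹Nonempty α›
    have := hx A
    simp only [hx_eq, zero_mul, sum_const_zero] at this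
    linarith
  have hmem : d⁻¹ • x ∈ minCutSuperlevel f (C / d) := by
    refine (mem_minCutSuperlevel f).2 ⟨⟨fun s => mul_nonneg (inv_nonneg.2 hd.le) (hx0 s), ?_⟩,
      fun A => ?_⟩
    · simp [← mul_sum, d, hd.ne']
    · simp only [Pi.smul_apply, smul_eq_mul, mul_assoc, ← mul_sum]
      rw [div_eq_inv_mul]
      exact mul_le_mul_of_nonneg_left (hx A) (inv_nonneg.2 hd.le)
  have := hmax _ ⟨_, hmem⟩
  rwa [div_le_iff₀ hd, le_mul_iff_one_le_right hC] at this

theorem exists_ne_zero_forall_tight_sum_mul_eq_zero [Fintype α] [DecidableEq α]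
    {f : ι → Finset α → ℝ} (hf : ∀ s A B, f s (A ∪ B) + f s (A ∩ B) ≤ f s A + f s B)
    {l : ι → ℝ} (hl0 : ∀ s, 0 ≤ l s) (hlC : ∀ A, C ≤ ∑ s, l s * f s A)
    (hcard : Fintype.card α + 1 < #{s | 0 < l s}) :
    ∃ μ : ι → ℝ, μ ≠ 0 ∧ (∀ s, μ s ≠ 0 → 0 < l s) ∧
      ∀ A, ∑ s, l s * f s A = C → ∑ s, μ s * f s A = 0 := by
  set M := univ.filter fun A => ∑ s, l s * f s A = C
  have htight := fun A (hA : A ∈ M) B (hB : B ∈ M) =>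
    sum_mul_sup_inf_eq_of_sum_mul_eq hf hl0 hlC (mem_filter.1 hA).2 (mem_filter.1 hB).2
  obtain ⟨T, hT, hTzero⟩ := exists_card_le_forall_eq_zero_of_isModularOn (G := ℝ)
    (fun A hA B hB => mem_filter.2 ⟨mem_univ _, (htight A hA B hB).1⟩)
    (fun A hA B hB => mem_filter.2 ⟨mem_univ _, (htight A hA B hB).2.1⟩)
  obtain ⟨μ, hμ0, hμS, hμT⟩ := exists_ne_zero_forall_sum_mul_eq_zero f (hT.trans_lt hcard)
  have hμl : ∀ s, μ s ≠ 0 → 0 < l s := fun s hs => by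
    by_contra h
    exact hs (hμS s (by simpa using h))
  refine ⟨μ, hμ0, hμl, fun A hA => hTzero (fun A => ∑ s, μ s * f s A) (fun A hA B hB => ?_) hμT A
    (mem_filter.2 ⟨mem_univ _, hA⟩)⟩
  simp only [← sum_add_distrib, ← mul_add]
  refine sum_congr rfl fun s _ => ?_
  by_cases hs : μ s = 0
  · simp [hs]
  · exact congrArg (μ s * ·) ((htight A hA B hB).2.2 s (hμl s hs))

theorem card_support_le_of_mem_extremePoints [Fintype α] [DecidableEq α] {f : ι → Finset α → ℝ}
    (hf : ∀ s A B, f s (A ∪ B) + f s (A ∩ B) ≤ f s A + f s B) (hC : 0 < C)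
    (hmax : ∀ c, (minCutSuperlevel f c).Nonempty → c ≤ C) {l : ι → ℝ}
    (hl : l ∈ (minCutSuperlevel f C).extremePoints ℝ) :
    #{s | 0 < l s} ≤ Fintype.card α + 1 := by
  obtain ⟨⟨hl0, hl1⟩, hlC⟩ := (mem_minCutSuperlevel f).1 hl.1
  by_contra! hcard
  obtain ⟨μ, hμ0, hμl, hμM⟩ := exists_ne_zero_forall_tight_sum_mul_eq_zero hf hl0 hlC hcard
  have hev : ∀ᶠ t in 𝓝 (0 : ℝ),
      (∀ s, 0 ≤ l s + t * μ s) ∧ ∀ A, C ≤ ∑ s, (l s + t * μ s) * f s A := by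
    refine (eventually_all.2 fun s => eventually_le_add_mul (hl0 s) fun h => ?_).and
      (eventually_all.2 fun A => ?_)
    · by_contra hne
      exact (hμl s hne).ne' h
    · simpa [add_mul, sum_add_distrib, mul_assoc, ← mul_sum] using
        eventually_le_add_mul (hlC A) (hμM A)
  have hσ : ∑ s, μ s = 0 := by
    have hmin : IsLocalMin (fun t : ℝ => ∑ s, (l s + t * μ s)) 0 := hev.mono fun t ht => by
      simpa [hl1] using one_le_sum_of_forall_le_sum_mul hmax hC ht.1 ht.2
    exact hmin.hasDerivAt_eq_zero
      (HasDerivAt.fun_sum fun s _ => (hasDerivAt_mul_const (μ s)).const_add (l s))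
  refine hμ0 (eq_zero_of_mem_extremePoints hl (hev.mono fun t ht => ?_))
  refine (mem_minCutSuperlevel f).2 ⟨⟨ht.1, ?_⟩, ht.2⟩
  simp [sum_add_distrib, ← mul_sum, hl1, hσ]

end Optimal

theorem simple_schedules_optimal_general (N : ℕ)
    (f : Fin (2 ^ N) → Finset (Fin N) → ℝ)
    (hf : ∀ s, ∀ A B : Finset (Fin N), f s A + f s B ≥ f s (A ∪ B) + f s (A ∩ B))
    (C' : ℝ)
    (hC' : C' = sSup {v : ℝ | ∃ l : Fin (2 ^ N) → ℝ,
        ((∀ s, 0 ≤ l s) ∧ ∑ s, l s = 1) ∧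
        v = sInf {u : ℝ | ∃ A : Finset (Fin N), u = ∑ s, l s * f s A}})
    (hpos : 0 < C') :
    ∃ l : Fin (2 ^ N) → ℝ,
      ((∀ s, 0 ≤ l s) ∧ ∑ s, l s = 1) ∧
      sInf {u : ℝ | ∃ A : Finset (Fin N), u = ∑ s, l s * f s A} = C' ∧
      (Finset.univ.filter (fun s => 0 < l s)).card ≤ N + 1 := by
  have : Nonempty (Fin (2 ^ N)) := ⟨⟨0, by positivity⟩⟩
  obtain ⟨⟨l₀, hl₀, hl₀C⟩, hub⟩ : IsGreatest (minCutValue f '' stdSimplex ℝ _) C' := by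
    convert isGreatest_sSup_minCutValue f
    rw [hC']
    congr 1
    ext v
    simp [eq_comm, minCutValue, stdSimplex]
  have hmax : ∀ c, (minCutSuperlevel f c).Nonempty → c ≤ C' := fun c ⟨l, hl⟩ =>
    ((le_minCutValue_iff f).2 ((mem_minCutSuperlevel f).1 hl).2).trans (hub ⟨l, hl.1, rfl⟩)
  have hne : (minCutSuperlevel f C').Nonempty :=
    ⟨l₀, (mem_minCutSuperlevel f).2 ⟨hl₀, (le_minCutValue_iff f).1 hl₀C.ge⟩⟩
  obtain ⟨l, hl⟩ := (isCompact_minCutSuperlevel f C').extremePoints_nonempty hne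
  obtain ⟨hlΔ, hlC⟩ := (mem_minCutSuperlevel f).1 hl.1
  refine ⟨l, hlΔ, le_antisymm (hub ⟨l, hlΔ, rfl⟩) ((le_minCutValue_iff f).2 hlC), ?_⟩
  simpa using card_support_le_of_mem_extremePoints hf hpos hmax hl

/-- main theorem, abstract form: for nonnegative submodular set
functions `f s`, `s ∈ [0 : 2^N - 1]`, and
`C' = max_{λ ∈ Δ} min_{A ⊆ [N]} Σ_s λ_s f_s(A)`, if `C' > 0` then there is an optimal
probability vector `λ*` achieving `C'` with at most `N+1` strictly positive entries. -/
theorem simple_schedules_optimal (N : ℕ)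
    (f : Fin (2 ^ N) → Finset (Fin N) → ℝ)
    (hf : ∀ s, ∀ A B : Finset (Fin N), f s A + f s B ≥ f s (A ∪ B) + f s (A ∩ B))
    (hf0 : ∀ s A, 0 ≤ f s A)
    (C' : ℝ)
    (hC' : C' = sSup {v : ℝ | ∃ l : Fin (2 ^ N) → ℝ,
        ((∀ s, 0 ≤ l s) ∧ ∑ s, l s = 1) ∧
        v = sInf {u : ℝ | ∃ A : Finset (Fin N), u = ∑ s, l s * f s A}})
    (hpos : 0 < C') :
    ∃ l : Fin (2 ^ N) → ℝ,
      ((∀ s, 0 ≤ l s) ∧ ∑ s, l s = 1) ∧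
      sInf {u : ℝ | ∃ A : Finset (Fin N), u = ∑ s, l s * f s A} = C' ∧
      (Finset.univ.filter (fun s => 0 < l s)).card ≤ N + 1 :=
  simple_schedules_optimal_general N f hf C' hC' hpos
end

section
/- Let f : 2^{[N]} → ℝ be submodular with f(∅) = 0, w ∈ ℝ^N with w ≥ 0, and x the greedy vector for a permutation π sorting w in nonincreasing order. Then for every y ∈ P(f), wᵀy ≤ wᵀx; i.e., the greedy vector is optimal for the linear program max{wᵀy : y ∈ P(f)}. -/
/-!
Abel summation along `π` writes `wᵀy` as `∑ᵢ (w_{π(i)} - w_{π(i+1)}) y(Aᵢ)` with `Aᵢ` the `i`-th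
chain set and `w_{π(N+1)} := 0`. The coefficients are nonnegative because `w` is sorted and
nonnegative, `y(Aᵢ) ≤ f(Aᵢ)` for `y ∈ P(f)`, and the same summation applied to the greedy
vector `x` telescopes to `∑ᵢ (w_{π(i)} - w_{π(i+1)}) f(Aᵢ)`.
-/

open Finset

theorem sum_range_mul_eq_by_parts {R : Type*} [CommRing R] (a u : ℕ → R) (n : ℕ) :
    ∑ i ∈ range n, a i * u i =
      ∑ i ∈ range n, (a i - a (i + 1)) * ∑ j ∈ range (i + 1), u j
        + a n * ∑ j ∈ range n, u j := by
  induction n with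
  | zero => simp
  | succ n ih => rw [sum_range_succ, ih, sum_range_succ _ n, sum_range_succ u]; ring

theorem sum_range_mul_le_of_sum_range_le {R : Type*} [CommRing R] [LinearOrder R]
    [IsStrictOrderedRing R] (a u v : ℕ → R) (n : ℕ)
    (ha : ∀ i < n, a (i + 1) ≤ a i) (hn : 0 ≤ a n)
    (huv : ∀ k ≤ n, ∑ j ∈ range k, u j ≤ ∑ j ∈ range k, v j) :
    ∑ i ∈ range n, a i * u i ≤ ∑ i ∈ range n, a i * v i := by
  rw [sum_range_mul_eq_by_parts a u, sum_range_mul_eq_by_parts a v]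
  refine add_le_add (sum_le_sum fun i hi => ?_) (mul_le_mul_of_nonneg_left (huv n le_rfl) hn)
  rw [mem_range] at hi
  exact mul_le_mul_of_nonneg_left (huv _ hi) (sub_nonneg.mpr (ha i hi))

section ZeroExtend

variable {M : Type*} {N : ℕ}

/-- Extension by zero realises the paper's convention `w_{π(N+1)} := 0`. -/
def zeroExtend [Zero M] (g : Fin N → M) (i : ℕ) : M :=
  if h : i < N then g ⟨i, h⟩ else 0

theorem zeroExtend_of_lt [Zero M] (g : Fin N → M) {i : ℕ} (hi : i < N) :
    zeroExtend g i = g ⟨i, hi⟩ :=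
  dif_pos hi

theorem zeroExtend_of_le [Zero M] (g : Fin N → M) {i : ℕ} (hi : N ≤ i) : zeroExtend g i = 0 :=
  dif_neg hi.not_gt

@[simp]
theorem zeroExtend_val [Zero M] (g : Fin N → M) (i : Fin N) : zeroExtend g i = g i :=
  zeroExtend_of_lt g i.isLt

theorem zeroExtend_succ_le [Zero M] [Preorder M] {g : Fin N → M} (hg : Antitone g)
    (hg0 : ∀ i, 0 ≤ g i) {i : ℕ} (hi : i < N) : zeroExtend g (i + 1) ≤ zeroExtend g i := by
  rw [zeroExtend_of_lt g hi]
  by_cases hi' : i + 1 < N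
  · rw [zeroExtend_of_lt g hi']
    exact hg (Fin.mk_le_mk.mpr i.le_succ)
  · rw [zeroExtend_of_le g (not_lt.mp hi')]
    exact hg0 _

theorem sum_mul_eq_sum_range_zeroExtend [CommSemiring M] (a u : Fin N → M) :
    ∑ i, a i * u i = ∑ i ∈ range N, zeroExtend a i * zeroExtend u i := by
  rw [← Fin.sum_univ_eq_sum_range]
  simp only [zeroExtend_val]

theorem sum_range_zeroExtend_comp_perm [AddCommMonoid M] (g : Fin N → M)
    (π : Equiv.Perm (Fin N)) (k : ℕ) :
    ∑ j ∈ range k, zeroExtend (g ∘ π) j = ∑ i ∈ univ.filter (fun i => (π.symm i : ℕ) < k), g i := by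
  rw [sum_filter, ← Equiv.sum_comp π, sum_fin_eq_sum_range]
  simp only [Equiv.symm_apply_apply]
  have hterm : ∀ x ∈ range N, (if h : x < N then if x < k then g (π ⟨x, h⟩) else 0 else 0)
      = if x ∈ range k then zeroExtend (g ∘ π) x else 0 := by
    intro x hx
    rw [mem_range] at hx
    simp [zeroExtend, hx]
  rw [sum_congr rfl hterm, sum_ite_mem, range_inter_range]
  refine (sum_subset (range_subset_range.mpr (min_le_right N k)) fun x hxk hxmin => ?_).symm
  simp only [mem_range, lt_min_iff, not_and_or, not_lt] at hxk hxmin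
  exact zeroExtend_of_le _ (hxmin.resolve_right hxk.not_ge)

theorem sum_range_zeroExtend_eq_sub [AddCommGroup M] {g : Fin N → M} {F : ℕ → M}
    (hg : ∀ i : Fin N, g i = F (i + 1) - F i) {k : ℕ} (hk : k ≤ N) :
    ∑ j ∈ range k, zeroExtend g j = F k - F 0 := by
  rw [← sum_range_sub F]
  refine sum_congr rfl fun j hj => ?_
  have hj : j < N := (mem_range.mp hj).trans_le hk
  rw [zeroExtend_of_lt g hj, hg]

end ZeroExtend

theorem greedy_dominates_polyhedron_general (N : ℕ) (f : Finset (Fin N) → ℝ)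
    (h0 : f ∅ = 0) (w : Fin N → ℝ) (hw : ∀ i, 0 ≤ w i)
    (π : Equiv.Perm (Fin N))
    (hsort : ∀ i j : Fin N, i ≤ j → w (π j) ≤ w (π i))
    (chain : ℕ → Finset (Fin N))
    (hchain : ∀ i, chain i = Finset.univ.filter (fun j : Fin N => (π.symm j : ℕ) < i))
    (x : Fin N → ℝ)
    (hx : ∀ j : Fin N, x j = f (chain ((π.symm j : ℕ) + 1)) - f (chain (π.symm j : ℕ))) :
    ∀ y : Fin N → ℝ, (∀ A : Finset (Fin N), ∑ i ∈ A, y i ≤ f A) →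
      ∑ i, w i * y i ≤ ∑ i, w i * x i := by
  intro y hy
  have hchain0 : chain 0 = ∅ := by simp [hchain]
  have hx_sum : ∀ k ≤ N, ∑ j ∈ range k, zeroExtend (x ∘ π) j = f (chain k) := fun k hk => by
    rw [sum_range_zeroExtend_eq_sub (F := f ∘ chain) (fun i => by simp [hx]) hk]
    simp [hchain0, h0]
  have hy_sum : ∀ k, ∑ j ∈ range k, zeroExtend (y ∘ π) j ≤ f (chain k) := fun k => by
    rw [sum_range_zeroExtend_comp_perm, hchain]
    exact hy _
  rw [← Equiv.sum_comp π, ← Equiv.sum_comp π (fun i => w i * x i),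
    sum_mul_eq_sum_range_zeroExtend, sum_mul_eq_sum_range_zeroExtend]
  refine sum_range_mul_le_of_sum_range_le _ _ _ N
    (fun i hi => zeroExtend_succ_le hsort (fun i => hw _) hi)
    (zeroExtend_of_le _ le_rfl).ge fun k hk => (hy_sum k).trans_eq (hx_sum k hk).symm

/-- the greedy vector `x` (for a permutation `π` sorting the nonnegative
weights `w` nonincreasingly) satisfies `wᵀy ≤ wᵀx` for every `y` in the submodular
polyhedron `P(f)`. -/
theorem greedy_dominates_polyhedron (N : ℕ) (f : Finset (Fin N) → ℝ)
    (hf : ∀ A B : Finset (Fin N), f A + f B ≥ f (A ∪ B) + f (A ∩ B))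
    (h0 : f ∅ = 0) (w : Fin N → ℝ) (hw : ∀ i, 0 ≤ w i)
    (π : Equiv.Perm (Fin N))
    (hsort : ∀ i j : Fin N, i ≤ j → w (π j) ≤ w (π i))
    (chain : ℕ → Finset (Fin N))
    (hchain : ∀ i, chain i = Finset.univ.filter (fun j : Fin N => (π.symm j : ℕ) < i))
    (x : Fin N → ℝ)
    (hx : ∀ j : Fin N, x j = f (chain ((π.symm j : ℕ) + 1)) - f (chain (π.symm j : ℕ))) :
    ∀ y : Fin N → ℝ, (∀ A : Finset (Fin N), ∑ i ∈ A, y i ≤ f A) →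
      ∑ i, w i * y i ≤ ∑ i, w i * x i :=
  greedy_dominates_polyhedron_general N f h0 w hw π hsort chain hchain x hx
end
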